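/- arXiv:1610.09661 — 3 statements merged into one kernel-verified Lean document; each statement's English description precedes it below -/
import Mathlib

section
/- Let P be a row-stochastic N×N matrix with Markov–Dobrushin coefficient κ := min_{i,i'} ∑_j min(p_{ij}, p_{i'j}). Then for every n ≥ 0 and every subset A of states, max_i P^n(i,A) − min_i P^n(i,A) ≤ (1−κ)^n. -/
/-- Contraction estimate: `max_i Pⁿ(i,A) − min_i Pⁿ(i,A) ≤ (1−κ)ⁿ` with the
Markov–Dobrushin coefficient `κ`. -/
theorem stmt_2 (N : ℕ) (hN : 1 ≤ N) (P : Matrix (Fin N) (Fin N) ℝ)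
    (hpos : ∀ i j, 0 ≤ P i j) (hrow : ∀ i, ∑ j, P i j = 1)
    (κ : ℝ) (hκ : κ = ⨅ i : Fin N, ⨅ i' : Fin N, ∑ j, min (P i j) (P i' j))
    (n : ℕ) (A : Finset (Fin N)) :
    (⨆ i : Fin N, ∑ j ∈ A, (P ^ n) i j) - (⨅ i : Fin N, ∑ j ∈ A, (P ^ n) i j)
      ≤ (1 - κ) ^ n := by
  haveI : NeZero N := ⟨by omega⟩
  have hne : Nonempty (Fin N) := ⟨0⟩
  have bddA : ∀ f : Fin N → ℝ, BddAbove (Set.range f) :=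
    fun f => (Set.finite_range f).bddAbove
  have bddB : ∀ f : Fin N → ℝ, BddBelow (Set.range f) :=
    fun f => (Set.finite_range f).bddBelow
  have hκle : ∀ i i' : Fin N, κ ≤ ∑ j, min (P i j) (P i' j) := by
    intro i i'
    rw [hκ]
    exact le_trans (ciInf_le (bddB _) i) (ciInf_le (bddB _) i')
  have hκ1 : κ ≤ 1 := by
    have h := hκle 0 0
    simpa [hrow 0] using h
  induction n with
  | zero =>
    have h0 : ∀ i : Fin N, ∑ j ∈ A, (P ^ 0) i j = if i ∈ A then (1:ℝ) else 0 := by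
      intro i
      simp [Matrix.one_apply, Finset.sum_ite_eq]
    have hsup : (⨆ i : Fin N, ∑ j ∈ A, (P ^ 0) i j) ≤ 1 := by
      apply ciSup_le
      intro i
      rw [h0 i]; split_ifs <;> norm_num
    have hinf : (0:ℝ) ≤ ⨅ i : Fin N, ∑ j ∈ A, (P ^ 0) i j := by
      apply le_ciInf
      intro i
      rw [h0 i]; split_ifs <;> norm_num
    rw [pow_zero] at hsup hinf ⊢
    linarith
  | succ n ih =>
    set S := ⨆ i : Fin N, ∑ j ∈ A, (P ^ n) i j with hS
    set I := ⨅ i : Fin N, ∑ j ∈ A, (P ^ n) i j with hI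
    have hg_le_S : ∀ j : Fin N, ∑ k ∈ A, (P ^ n) j k ≤ S := fun j => le_ciSup (f := fun i : Fin N => ∑ k ∈ A, (P ^ n) i k) (bddA _) j
    have hI_le_g : ∀ j : Fin N, I ≤ ∑ k ∈ A, (P ^ n) j k := fun j => ciInf_le (f := fun i : Fin N => ∑ k ∈ A, (P ^ n) i k) (bddB _) j
    have hSI : 0 ≤ S - I := by
      have h1 := hg_le_S 0
      have h2 := hI_le_g 0
      linarith
    have hrep : ∀ i : Fin N, ∑ j ∈ A, (P ^ (n+1)) i j
        = ∑ j, P i j * (∑ k ∈ A, (P ^ n) j k) := by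
      intro i
      rw [pow_succ']
      simp only [Matrix.mul_apply]
      rw [Finset.sum_comm]
      simp [Finset.mul_sum]
    have key : ∀ i i' : Fin N,
        (∑ j ∈ A, (P ^ (n+1)) i j) - (∑ j ∈ A, (P ^ (n+1)) i' j) ≤ (1-κ)*(S-I) := by
      intro i i'
      rw [hrep i, hrep i']
      set M := ∑ j, min (P i j) (P i' j) with hM
      have hMκ : κ ≤ M := hκle i i'
      have e1 : ∑ j, (P i j - min (P i j) (P i' j)) * (∑ k ∈ A, (P ^ n) j k)
          ≤ (1 - M) * S := by
        calc ∑ j, (P i j - min (P i j) (P i' j)) * (∑ k ∈ A, (P ^ n) j k)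
            ≤ ∑ j, (P i j - min (P i j) (P i' j)) * S := by
              apply Finset.sum_le_sum
              intro j _
              exact mul_le_mul_of_nonneg_left (hg_le_S j)
                (by linarith [min_le_left (P i j) (P i' j)])
          _ = (1 - M) * S := by
              rw [← Finset.sum_mul, Finset.sum_sub_distrib, hrow i, hM]
      have e2 : (1 - M) * I
          ≤ ∑ j, (P i' j - min (P i j) (P i' j)) * (∑ k ∈ A, (P ^ n) j k) := by
        calc (1 - M) * I
            = ∑ j, (P i' j - min (P i j) (P i' j)) * I := by
              rw [← Finset.sum_mul, Finset.sum_sub_distrib, hrow i', hM]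
          _ ≤ ∑ j, (P i' j - min (P i j) (P i' j)) * (∑ k ∈ A, (P ^ n) j k) := by
              apply Finset.sum_le_sum
              intro j _
              exact mul_le_mul_of_nonneg_left (hI_le_g j)
                (by linarith [min_le_right (P i j) (P i' j)])
      have e3 : (∑ j, P i j * (∑ k ∈ A, (P ^ n) j k))
            - (∑ j, P i' j * (∑ k ∈ A, (P ^ n) j k))
          = (∑ j, (P i j - min (P i j) (P i' j)) * (∑ k ∈ A, (P ^ n) j k))
            - (∑ j, (P i' j - min (P i j) (P i' j)) * (∑ k ∈ A, (P ^ n) j k)) := by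
        simp only [sub_mul, Finset.sum_sub_distrib]
        ring
      have e4 : (1 - M) * (S - I) ≤ (1 - κ) * (S - I) :=
        mul_le_mul_of_nonneg_right (by linarith) hSI
      have e5 : (1 - M) * S - (1 - M) * I = (1 - M) * (S - I) := by ring
      linarith
    have hsup : (⨆ i : Fin N, ∑ j ∈ A, (P ^ (n+1)) i j)
        ≤ (1-κ)*(S-I) + (⨅ i : Fin N, ∑ j ∈ A, (P ^ (n+1)) i j) := by
      apply ciSup_le
      intro i
      have : (∑ j ∈ A, (P ^ (n+1)) i j) - (1-κ)*(S-I)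
          ≤ ⨅ i' : Fin N, ∑ j ∈ A, (P ^ (n+1)) i' j := by
        apply le_ciInf
        intro i'
        have := key i i'
        linarith
      linarith
    have hmul := mul_le_mul_of_nonneg_left ih (by linarith : (0:ℝ) ≤ 1 - κ)
    have hps : (1 - κ) ^ (n + 1) = (1 - κ) * (1 - κ) ^ n := pow_succ' _ _
    linarith
end

section
/- Let P be a row-stochastic N×N matrix with κ := min_{i,i'} ∑_j min(p_{ij}, p_{i'j}) > 0. Then there exists a unique probability vector μ with μP = μ, and for every state i, subset A, and n ≥ 0, |P^n(i,A) − μ(A)| ≤ (1−κ)^n. -/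
/-!
Everything rests on the ℓ¹-contraction `‖f P‖₁ ≤ (1 - κ) ‖f‖₁` for row vectors `f` of total mass
zero. Writing `f = f⁺ - f⁻` with `∑ f⁺ = ∑ f⁻ = s`, every column satisfies
`s (f P)ⱼ = ∑ᵢ ∑ᵢ' f⁺ᵢ f⁻ᵢ' (Pᵢⱼ - Pᵢ'ⱼ)`, while `∑ⱼ |Pᵢⱼ - Pᵢ'ⱼ| = 2 - 2 ∑ⱼ min (Pᵢⱼ, Pᵢ'ⱼ)`
is at most `2 (1 - κ)`. Consequently the rows `δᵢ Pⁿ` form a Cauchy sequence whose limit is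
stationary, two stationary distributions coincide, and
`|Pⁿ(i, A) - μ(A)| ≤ ½ ‖(δᵢ - μ) Pⁿ‖₁ ≤ (1 - κ)ⁿ`.
-/

open Finset Matrix Filter

section

variable {ι : Type*} [Fintype ι]

lemma sum_posPart_eq_sum_negPart {f : ι → ℝ} (hf : ∑ i, f i = 0) :
    ∑ i, (f i)⁺ = ∑ i, (f i)⁻ := by
  have h : ∑ i, ((f i)⁺ - (f i)⁻) = 0 := by simpa only [posPart_sub_negPart] using hf
  rwa [sum_sub_distrib, sub_eq_zero] at h

lemma sum_abs_eq_two_mul_sum_posPart {f : ι → ℝ} (hf : ∑ i, f i = 0) :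
    ∑ i, |f i| = 2 * ∑ i, (f i)⁺ := by
  simp only [← posPart_add_negPart, sum_add_distrib, ← sum_posPart_eq_sum_negPart hf]
  ring

lemma sum_posPart_mul_sum_mul_eq {f : ι → ℝ} (hf : ∑ i, f i = 0) (g : ι → ℝ) :
    (∑ i, (f i)⁺) * ∑ i, f i * g i = ∑ i, ∑ i', (f i)⁺ * (f i')⁻ * (g i - g i') := by
  have hfg : ∑ i, f i * g i = ∑ i, (f i)⁺ * g i - ∑ i, (f i)⁻ * g i := by
    simp only [← sum_sub_distrib, ← sub_mul, posPart_sub_negPart]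
  calc (∑ i, (f i)⁺) * ∑ i, f i * g i
      = (∑ i, (f i)⁺ * g i) * ∑ i', (f i')⁻ - (∑ i, (f i)⁺) * ∑ i', (f i')⁻ * g i' := by
        rw [hfg, ← sum_posPart_eq_sum_negPart hf]; ring
    _ = ∑ i, ∑ i', (f i)⁺ * (f i')⁻ * (g i - g i') := by
        simp only [sum_mul_sum, ← sum_sub_distrib]
        congr! 2 with i _ i' _
        ring

lemma abs_sum_le_half_sum_abs [DecidableEq ι] {d : ι → ℝ} (hd : ∑ j, d j = 0) (A : Finset ι) :
    |∑ j ∈ A, d j| ≤ (∑ j, |d j|) / 2 := by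
  have hA : ∑ j ∈ A, d j = -∑ j ∈ Aᶜ, d j := by
    rw [eq_neg_iff_add_eq_zero, sum_add_sum_compl, hd]
  have h₁ := abs_sum_le_sum_abs d A
  have h₂ := abs_sum_le_sum_abs d Aᶜ
  rw [← sum_add_sum_compl A fun j => |d j|]
  rw [hA, abs_neg] at h₁ ⊢
  linarith

lemma sum_abs_sub_le_two {p q : ι → ℝ} (hp : p ∈ stdSimplex ℝ ι) (hq : q ∈ stdSimplex ℝ ι) :
    ∑ i, |p i - q i| ≤ 2 := by
  calc ∑ i, |p i - q i| ≤ ∑ i, (p i + q i) := sum_le_sum fun i _ =>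
        (abs_sub _ _).trans_eq (by rw [abs_of_nonneg (hp.1 i), abs_of_nonneg (hq.1 i)])
    _ = 2 := by rw [sum_add_distrib, hp.2, hq.2]; norm_num

end

section

variable {ι ι' : Type*} [Fintype ι']

lemma sum_abs_sub_eq_two_sub_two_mul_sum_min {P : Matrix ι ι' ℝ} (hrow : ∀ i, ∑ j, P i j = 1)
    (i i' : ι) : ∑ j, |P i j - P i' j| = 2 - 2 * ∑ j, min (P i j) (P i' j) := by
  have h : ∀ j, |P i j - P i' j| = P i j + P i' j - 2 * min (P i j) (P i' j) := fun j => by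
    rw [← max_sub_min_eq_abs']; linarith [min_add_max (P i j) (P i' j)]
  simp only [h, sum_sub_distrib, sum_add_distrib, ← mul_sum, hrow]
  ring

variable [Fintype ι]

lemma sum_vecMul_eq_sum {P : Matrix ι ι' ℝ} (hrow : ∀ i, ∑ j, P i j = 1) (f : ι → ℝ) :
    ∑ j, (f ᵥ* P) j = ∑ i, f i := by
  simp only [vecMul, dotProduct]
  rw [sum_comm]
  simp only [← mul_sum, hrow, mul_one]

lemma sum_abs_vecMul_le {P : Matrix ι ι' ℝ} {c : ℝ}
    (hP : ∀ i i', ∑ j, |P i j - P i' j| ≤ 2 * c) {f : ι → ℝ} (hf : ∑ i, f i = 0) :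
    ∑ j, |(f ᵥ* P) j| ≤ c * ∑ i, |f i| := by
  set s := ∑ i, (f i)⁺ with hs_def
  have hff : ∀ i i', 0 ≤ (f i)⁺ * (f i')⁻ := fun i i' =>
    mul_nonneg (posPart_nonneg _) (negPart_nonneg _)
  have hs : 0 ≤ s := sum_nonneg fun i _ => posPart_nonneg (f i)
  rcases hs.eq_or_lt with hs | hs
  · have hf0 : ∀ i, f i = 0 := fun i => abs_eq_zero.1 <|
      (sum_eq_zero_iff_of_nonneg fun i _ => abs_nonneg (f i)).1
        (by rw [sum_abs_eq_two_mul_sum_posPart hf, ← hs_def, ← hs, mul_zero]) i (mem_univ i)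
    simp [vecMul, dotProduct, hf0]
  rw [sum_abs_eq_two_mul_sum_posPart hf]
  refine le_of_mul_le_mul_left ?_ hs
  calc s * ∑ j, |(f ᵥ* P) j|
      = ∑ j, |∑ i, ∑ i', (f i)⁺ * (f i')⁻ * (P i j - P i' j)| := by
        rw [mul_sum]
        refine sum_congr rfl fun j _ => ?_
        rw [← abs_of_pos hs, ← abs_mul]
        exact congrArg _ (sum_posPart_mul_sum_mul_eq hf fun i => P i j)
    _ ≤ ∑ j, ∑ i, ∑ i', (f i)⁺ * (f i')⁻ * |P i j - P i' j| := by
        gcongr with j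
        refine (abs_sum_le_sum_abs _ _).trans (sum_le_sum fun i _ =>
          (abs_sum_le_sum_abs _ _).trans_eq (sum_congr rfl fun i' _ => ?_))
        rw [abs_mul, abs_of_nonneg (hff i i')]
    _ = ∑ i, ∑ i', (f i)⁺ * (f i')⁻ * ∑ j, |P i j - P i' j| := by
        simp only [mul_sum]
        rw [sum_comm]; exact sum_congr rfl fun i _ => sum_comm
    _ ≤ ∑ i, ∑ i', (f i)⁺ * (f i')⁻ * (2 * c) := by
        gcongr with i _ i' _
        exact hP i i'
    _ = s * (c * (2 * s)) := by
        simp only [← sum_mul, ← mul_sum, ← sum_posPart_eq_sum_negPart hf]; ring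

lemma eq_of_vecMul_eq_self {P : Matrix ι ι ℝ} {c : ℝ} (hc : c < 1)
    (hPc : ∀ i i', ∑ j, |P i j - P i' j| ≤ 2 * c) {μ ν : ι → ℝ} (hsum : ∑ i, μ i = ∑ i, ν i)
    (hμ : μ ᵥ* P = μ) (hν : ν ᵥ* P = ν) : μ = ν := by
  have hmass : ∑ i, (μ - ν) i = 0 := by simp only [Pi.sub_apply, sum_sub_distrib, hsum, sub_self]
  have hcontr := sum_abs_vecMul_le hPc hmass
  rw [sub_vecMul, hμ, hν] at hcontr
  have hnonneg : 0 ≤ ∑ i, |(μ - ν) i| := sum_nonneg fun i _ => abs_nonneg _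
  have hzero : ∑ i, |(μ - ν) i| = 0 := le_antisymm (by nlinarith) hnonneg
  refine sub_eq_zero.1 (funext fun i => abs_eq_zero.1 ?_)
  exact (sum_eq_zero_iff_of_nonneg fun i _ => abs_nonneg _).1 hzero i (mem_univ i)

end

section

variable {ι : Type*} [Fintype ι] [DecidableEq ι]

lemma sum_abs_vecMul_pow_le {P : Matrix ι ι ℝ} (hrow : ∀ i, ∑ j, P i j = 1) {c : ℝ} (hc : 0 ≤ c)
    (hP : ∀ i i', ∑ j, |P i j - P i' j| ≤ 2 * c) {f : ι → ℝ} (hf : ∑ i, f i = 0) (n : ℕ) :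
    ∑ j, |(f ᵥ* P ^ n) j| ≤ c ^ n * ∑ i, |f i| := by
  induction n generalizing f with
  | zero => simp
  | succ n ih =>
    rw [pow_succ', ← vecMul_vecMul]
    calc ∑ j, |((f ᵥ* P) ᵥ* P ^ n) j| ≤ c ^ n * ∑ j, |(f ᵥ* P) j| :=
          ih (by rw [sum_vecMul_eq_sum hrow, hf])
      _ ≤ c ^ n * (c * ∑ i, |f i|) := by gcongr; exact sum_abs_vecMul_le hP hf
      _ = c ^ (n + 1) * ∑ i, |f i| := by ring

lemma vecMul_pow_eq_self {P : Matrix ι ι ℝ} {μ : ι → ℝ} (hμ : μ ᵥ* P = μ) (n : ℕ) :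
    μ ᵥ* P ^ n = μ := by
  induction n with
  | zero => simp
  | succ n ih => rw [pow_succ, ← vecMul_vecMul, ih, hμ]

lemma vecMul_mem_stdSimplex {P : Matrix ι ι ℝ} (hP : P ∈ rowStochastic ℝ ι) {p : ι → ℝ}
    (hp : p ∈ stdSimplex ℝ ι) : p ᵥ* P ∈ stdSimplex ℝ ι :=
  ⟨nonneg_vecMul_of_mem_rowStochastic hP hp.1,
    by rw [sum_vecMul_eq_sum (sum_row_of_mem_rowStochastic hP), hp.2]⟩

lemma dist_vecMul_pow_succ_le {P : Matrix ι ι ℝ} (hP : P ∈ rowStochastic ℝ ι) {c : ℝ}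
    (hc : 0 ≤ c) (hPc : ∀ i i', ∑ j, |P i j - P i' j| ≤ 2 * c) {p : ι → ℝ}
    (hp : p ∈ stdSimplex ℝ ι) (n : ℕ) :
    dist (p ᵥ* P ^ n) (p ᵥ* P ^ (n + 1)) ≤ 2 * c ^ n := by
  have hdiff : p ᵥ* P ^ n - p ᵥ* P ^ (n + 1) = (p - p ᵥ* P) ᵥ* P ^ n := by
    simp only [sub_vecMul, vecMul_vecMul, pow_succ']
  have hmass : ∑ i, (p - p ᵥ* P) i = 0 := by
    simp only [Pi.sub_apply, sum_sub_distrib,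
      sum_vecMul_eq_sum (sum_row_of_mem_rowStochastic hP), sub_self]
  have hsum : ∑ j, |(p ᵥ* P ^ n - p ᵥ* P ^ (n + 1)) j| ≤ 2 * c ^ n := by
    rw [hdiff]
    calc _ ≤ c ^ n * ∑ i, |(p - p ᵥ* P) i| :=
          sum_abs_vecMul_pow_le (sum_row_of_mem_rowStochastic hP) hc hPc hmass n
      _ ≤ c ^ n * 2 := by gcongr; exact sum_abs_sub_le_two hp (vecMul_mem_stdSimplex hP hp)
      _ = 2 * c ^ n := mul_comm _ _
  refine (dist_pi_le_iff (by positivity)).2 fun j => ?_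
  rw [Real.dist_eq]
  exact (single_le_sum (f := fun j => |(p ᵥ* P ^ n - p ᵥ* P ^ (n + 1)) j|)
    (fun _ _ => abs_nonneg _) (mem_univ j)).trans hsum

lemma exists_mem_stdSimplex_vecMul_eq_self [Nonempty ι] {P : Matrix ι ι ℝ}
    (hP : P ∈ rowStochastic ℝ ι) {c : ℝ} (hc₀ : 0 ≤ c) (hc₁ : c < 1)
    (hPc : ∀ i i', ∑ j, |P i j - P i' j| ≤ 2 * c) :
    ∃ μ ∈ stdSimplex ℝ ι, μ ᵥ* P = μ := by
  set p : ι → ℝ := Pi.single (Classical.arbitrary ι) 1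
  have hp : p ∈ stdSimplex ℝ ι := single_mem_stdSimplex ℝ _
  set v : ℕ → ι → ℝ := fun n => p ᵥ* P ^ n
  have hv : ∀ n, v n ∈ stdSimplex ℝ ι := fun n => vecMul_mem_stdSimplex (pow_mem hP n) hp
  obtain ⟨μ, hμ⟩ := cauchySeq_tendsto_of_complete
    (cauchySeq_of_le_geometric c 2 hc₁ (dist_vecMul_pow_succ_le hP hc₀ hPc hp))
  have hshift : (fun n => v n ᵥ* P) = v ∘ (· + 1) :=
    funext fun n => by simp only [v, Function.comp, vecMul_vecMul, pow_succ]
  refine ⟨μ, (isClosed_stdSimplex ℝ ι).mem_of_tendsto hμ (Eventually.of_forall hv), ?_⟩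
  refine tendsto_nhds_unique ?_ (hμ.comp (tendsto_add_atTop_nat 1))
  rw [← hshift]
  exact ((continuous_id.matrix_vecMul continuous_const).tendsto μ).comp hμ

lemma abs_sum_pow_sub_sum_le {P : Matrix ι ι ℝ} (hP : P ∈ rowStochastic ℝ ι) {c : ℝ} (hc : 0 ≤ c)
    (hPc : ∀ i i', ∑ j, |P i j - P i' j| ≤ 2 * c) {μ : ι → ℝ} (hμ : μ ∈ stdSimplex ℝ ι)
    (hμP : μ ᵥ* P = μ) (i : ι) (A : Finset ι) (n : ℕ) :
    |∑ j ∈ A, (P ^ n) i j - ∑ j ∈ A, μ j| ≤ c ^ n := by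
  set f : ι → ℝ := Pi.single i 1 - μ
  have hf : ∑ k, f k = 0 := by
    simp only [f, Pi.sub_apply, sum_sub_distrib, (single_mem_stdSimplex ℝ i).2, hμ.2, sub_self]
  have hd : ∀ j, (P ^ n) i j - μ j = (f ᵥ* P ^ n) j := fun j => by
    rw [sub_vecMul, single_one_vecMul, vecMul_pow_eq_self hμP]; rfl
  have hrow := sum_row_of_mem_rowStochastic (pow_mem hP n)
  rw [← sum_sub_distrib]
  simp only [hd]
  calc _ ≤ (∑ j, |(f ᵥ* P ^ n) j|) / 2 :=
        abs_sum_le_half_sum_abs (by rw [sum_vecMul_eq_sum hrow, hf]) A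
    _ ≤ c ^ n * 2 / 2 := by
        gcongr
        exact (sum_abs_vecMul_pow_le (sum_row_of_mem_rowStochastic hP) hc hPc hf n).trans
          (by gcongr; exact sum_abs_sub_le_two (single_mem_stdSimplex ℝ i) hμ)
    _ = c ^ n := by ring

end

/-- Ergodic theorem under the Markov–Dobrushin condition: there is a unique
stationary distribution `μ` and `|Pⁿ(i,A) − μ(A)| ≤ (1−κ)ⁿ`. -/
theorem stmt_3 (N : ℕ) (hN : 1 ≤ N) (P : Matrix (Fin N) (Fin N) ℝ)
    (hpos : ∀ i j, 0 ≤ P i j) (hrow : ∀ i, ∑ j, P i j = 1)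
    (κ : ℝ) (hκ : κ = ⨅ i : Fin N, ⨅ i' : Fin N, ∑ j, min (P i j) (P i' j))
    (hκpos : 0 < κ) :
    ∃ μ : Fin N → ℝ, (∀ j, 0 ≤ μ j) ∧ (∑ j, μ j = 1) ∧
      (∀ j, ∑ i, μ i * P i j = μ j) ∧
      (∀ ν : Fin N → ℝ, (∀ j, 0 ≤ ν j) → (∑ j, ν j = 1) →
        (∀ j, ∑ i, ν i * P i j = ν j) → ν = μ) ∧
      ∀ (i : Fin N) (A : Finset (Fin N)) (n : ℕ),
        |(∑ j ∈ A, (P ^ n) i j) - ∑ j ∈ A, μ j| ≤ (1 - κ) ^ n := by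
  have : Nonempty (Fin N) := ⟨⟨0, hN⟩⟩
  have hP : P ∈ rowStochastic ℝ (Fin N) := mem_rowStochastic_iff_sum.2 ⟨hpos, hrow⟩
  have hκle : ∀ i i', κ ≤ ∑ j, min (P i j) (P i' j) := fun i i' => by
    rw [hκ]
    exact (ciInf_le (Set.finite_range _).bddBelow i).trans
      (ciInf_le (Set.finite_range _).bddBelow i')
  have hκ₁ : κ ≤ 1 := by simpa [hrow] using hκle ⟨0, hN⟩ ⟨0, hN⟩
  have hPc : ∀ i i', ∑ j, |P i j - P i' j| ≤ 2 * (1 - κ) := fun i i' => by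
    rw [sum_abs_sub_eq_two_sub_two_mul_sum_min hrow]; linarith [hκle i i']
  obtain ⟨μ, hμ, hμP⟩ := exists_mem_stdSimplex_vecMul_eq_self hP (by linarith) (by linarith) hPc
  refine ⟨μ, hμ.1, hμ.2, congrFun hμP, fun ν _ hν hνP => ?_,
    abs_sum_pow_sub_sum_le hP (by linarith) hPc hμ hμP⟩
  exact eq_of_vecMul_eq_self (by linarith) hPc (hν.trans hμ.2.symm) (funext hνP) hμP
end

section
/- Let (X_n) be a Markov chain on a finite state space S satisfying the Markov–Dobrushin condition κ := min_{i,i'} ∑_j min(p_{ij}, p_{i'j}) > 0 with unique invariant measure μ, and let f : S → ℝ satisfy ∑_x f(x)μ(x) = 0. Then u(x) := ∑_{k=0}^∞ E_x f(X_k) converges absolutely, solves the Poisson equation Lu(x) = −f(x) on all of S, satisfies the centering ∑_x u(x)μ(x) = 0, and is the unique such solution up to an additive constant. -/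
section Aux

variable {S : Type*} [Fintype S] [DecidableEq S] [Nonempty S]

noncomputable def mSup (g : S → ℝ) : ℝ := Finset.univ.sup' Finset.univ_nonempty g
noncomputable def mInf (g : S → ℝ) : ℝ := Finset.univ.inf' Finset.univ_nonempty g

lemma le_mSup (g : S → ℝ) (x : S) : g x ≤ mSup g :=
  Finset.le_sup' g (Finset.mem_univ x)

lemma mInf_le (g : S → ℝ) (x : S) : mInf g ≤ g x :=
  Finset.inf'_le g (Finset.mem_univ x)

lemma osc_nonneg (g : S → ℝ) : 0 ≤ mSup g - mInf g := by
  obtain ⟨x⟩ := ‹Nonempty S›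
  linarith [le_mSup g x, mInf_le g x]

lemma key_diff (P : Matrix S S ℝ) (hpos : ∀ i j, 0 ≤ P i j)
    (hrow : ∀ i, ∑ j, P i j = 1) (g : S → ℝ) (i i' : S) :
    (∑ j, P i j * g j) - (∑ j, P i' j * g j) ≤
      (1 - ∑ j, min (P i j) (P i' j)) * (mSup g - mInf g) := by
  set m : S → ℝ := fun j => min (P i j) (P i' j) with hm
  have h1 : ∀ j, 0 ≤ P i j - m j := fun j => by
    simp [hm, sub_nonneg, min_le_left]
  have h1' : ∀ j, 0 ≤ P i' j - m j := fun j => by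
    simp [hm, sub_nonneg, min_le_right]
  have hup : ∑ j, (P i j - m j) * g j ≤ (1 - ∑ j, m j) * mSup g := by
    calc ∑ j, (P i j - m j) * g j ≤ ∑ j, (P i j - m j) * mSup g := by
          exact Finset.sum_le_sum fun j _ =>
            mul_le_mul_of_nonneg_left (le_mSup g j) (h1 j)
      _ = (1 - ∑ j, m j) * mSup g := by
          rw [← Finset.sum_mul, Finset.sum_sub_distrib, hrow]
  have hlo : (1 - ∑ j, m j) * mInf g ≤ ∑ j, (P i' j - m j) * g j := by
    calc (1 - ∑ j, m j) * mInf g = ∑ j, (P i' j - m j) * mInf g := by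
          rw [← Finset.sum_mul, Finset.sum_sub_distrib, hrow]
      _ ≤ ∑ j, (P i' j - m j) * g j := Finset.sum_le_sum fun j _ =>
            mul_le_mul_of_nonneg_left (mInf_le g j) (h1' j)
  have hsplit : ∀ a : S → ℝ,
      ∑ j, (a j - m j) * g j = (∑ j, a j * g j) - ∑ j, m j * g j := by
    intro a
    rw [← Finset.sum_sub_distrib]
    exact Finset.sum_congr rfl fun j _ => by ring
  have hA := hsplit (fun j => P i j)
  have hB := hsplit (fun j => P i' j)
  have hms : (1 - ∑ j, m j) * (mSup g - mInf g)
      = (1 - ∑ j, m j) * mSup g - (1 - ∑ j, m j) * mInf g := by ring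
  rw [hms]
  linarith [hup, hlo]

lemma osc_contract (P : Matrix S S ℝ) (hpos : ∀ i j, 0 ≤ P i j)
    (hrow : ∀ i, ∑ j, P i j = 1) (κ : ℝ)
    (hκle : ∀ i i', κ ≤ ∑ j, min (P i j) (P i' j)) (g : S → ℝ) :
    mSup (fun x => ∑ y, P x y * g y) - mInf (fun x => ∑ y, P x y * g y)
      ≤ (1 - κ) * (mSup g - mInf g) := by
  obtain ⟨i, _, hi⟩ := Finset.exists_mem_eq_sup' (Finset.univ_nonempty (α := S))
    (fun x => ∑ y, P x y * g y)
  obtain ⟨i', _, hi'⟩ := Finset.exists_mem_eq_inf' (Finset.univ_nonempty (α := S))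
    (fun x => ∑ y, P x y * g y)
  rw [mSup, mInf, hi, hi']
  calc (∑ y, P i y * g y) - (∑ y, P i' y * g y)
      ≤ (1 - ∑ j, min (P i j) (P i' j)) * (mSup g - mInf g) :=
        key_diff P hpos hrow g i i'
    _ ≤ (1 - κ) * (mSup g - mInf g) :=
        mul_le_mul_of_nonneg_right (by linarith [hκle i i']) (osc_nonneg g)

end Aux

/-- Poisson equation without a potential and without a boundary: under the
Markov–Dobrushin condition and the centering condition on `f`, the function
`u(x) = ∑_k E_x f(X_k)` converges absolutely, solves `Lu = −f` on all of `S`,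
is centered, and is the unique solution up to an additive constant. -/
theorem stmt_12 {S : Type*} [Fintype S] [DecidableEq S] [Nonempty S] (P : Matrix S S ℝ)
    (hpos : ∀ i j, 0 ≤ P i j) (hrow : ∀ i, ∑ j, P i j = 1)
    (hκ : 0 < ⨅ i : S, ⨅ i' : S, ∑ j, min (P i j) (P i' j))
    (μ : S → ℝ) (hμpos : ∀ j, 0 ≤ μ j) (hμ1 : ∑ j, μ j = 1)
    (hμinv : ∀ j, ∑ i, μ i * P i j = μ j)
    (f : S → ℝ) (hf : ∑ x, f x * μ x = 0)
    (u : S → ℝ) (hu : ∀ x, u x = ∑' k : ℕ, ∑ y, (P ^ k) x y * f y) :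
    (∀ x, Summable fun k : ℕ => |∑ y, (P ^ k) x y * f y|) ∧
    (∀ x, (∑ y, P x y * u y) - u x = -f x) ∧
    (∑ x, u x * μ x = 0) ∧
    (∀ v : S → ℝ, (∀ x, (∑ y, P x y * v y) - v x = -f x) →
      ∃ c : ℝ, ∀ x, v x = u x + c) := by
  set κ : ℝ := ⨅ i : S, ⨅ i' : S, ∑ j, min (P i j) (P i' j) with hκdef
  have hκle : ∀ i i', κ ≤ ∑ j, min (P i j) (P i' j) := by
    intro i i'
    refine le_trans (ciInf_le (Set.Finite.bddBelow (Set.finite_range _)) i) ?_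
    exact ciInf_le (Set.Finite.bddBelow (Set.finite_range _)) i'
  have hκ1 : κ ≤ 1 := by
    obtain ⟨i⟩ := ‹Nonempty S›
    have := hκle i i
    simpa [hrow i] using this
  set r : ℝ := 1 - κ with hrdef
  have hr0 : 0 ≤ r := by linarith
  have hr1 : r < 1 := by linarith
  set g : ℕ → S → ℝ := fun k x => ∑ y, (P ^ k) x y * f y with hgdef
  have hg0 : ∀ x, g 0 x = f x := by
    intro x
    simp [hgdef, Matrix.one_apply]
  have hgsucc : ∀ k x, g (k + 1) x = ∑ y, P x y * g k y := by
    intro k x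
    simp only [hgdef, pow_succ', Matrix.mul_apply, Finset.sum_mul, Finset.mul_sum]
    rw [Finset.sum_comm]
    simp [mul_assoc]
  have hμk : ∀ k y, ∑ x, μ x * (P ^ k) x y = μ y := by
    intro k
    induction k with
    | zero => intro y; simp [Matrix.one_apply]
    | succ k ih =>
        intro y
        calc ∑ x, μ x * (P ^ (k + 1)) x y
            = ∑ z, (∑ x, μ x * (P ^ k) x z) * P z y := by
              simp only [pow_succ, Matrix.mul_apply, Finset.mul_sum, Finset.sum_mul]
              rw [Finset.sum_comm]
              simp [mul_assoc]
          _ = μ y := by simp only [ih]; exact hμinv y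
  have hgcent : ∀ k, ∑ x, μ x * g k x = 0 := by
    intro k
    calc ∑ x, μ x * g k x = ∑ y, (∑ x, μ x * (P ^ k) x y) * f y := by
          simp only [hgdef, Finset.mul_sum]
          rw [Finset.sum_comm]
          simp [Finset.sum_mul, mul_assoc]
      _ = ∑ y, μ y * f y := by simp only [hμk]
      _ = 0 := by rw [← hf]; exact Finset.sum_congr rfl fun y _ => mul_comm _ _
  -- oscillation decay
  have hosc : ∀ k, mSup (g k) - mInf (g k) ≤ (mSup f - mInf f) * r ^ k := by
    intro k
    induction k with
    | zero =>
        have h1 : g 0 = f := funext hg0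
        simp [h1]
    | succ k ih =>
        have h1 : g (k + 1) = fun x => ∑ y, P x y * g k y := funext (hgsucc k)
        rw [h1]
        calc mSup (fun x => ∑ y, P x y * g k y) - mInf (fun x => ∑ y, P x y * g k y)
            ≤ (1 - κ) * (mSup (g k) - mInf (g k)) := osc_contract P hpos hrow κ hκle (g k)
          _ ≤ r * ((mSup f - mInf f) * r ^ k) :=
              mul_le_mul_of_nonneg_left ih hr0
          _ = (mSup f - mInf f) * r ^ (k + 1) := by ring
  have hinfle : ∀ k, mInf (g k) ≤ 0 := by
    intro k
    have h1 : mInf (g k) = ∑ x, μ x * mInf (g k) := by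
      rw [← Finset.sum_mul, hμ1, one_mul]
    rw [h1, ← hgcent k]
    exact Finset.sum_le_sum fun x _ =>
      mul_le_mul_of_nonneg_left (mInf_le (g k) x) (hμpos x)
  have hsupge : ∀ k, 0 ≤ mSup (g k) := by
    intro k
    have h1 : mSup (g k) = ∑ x, μ x * mSup (g k) := by
      rw [← Finset.sum_mul, hμ1, one_mul]
    rw [h1, ← hgcent k]
    exact Finset.sum_le_sum fun x _ =>
      mul_le_mul_of_nonneg_left (le_mSup (g k) x) (hμpos x)
  have hbound : ∀ k x, |g k x| ≤ (mSup f - mInf f) * r ^ k := by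
    intro k x
    have h1 := le_mSup (g k) x
    have h2 := mInf_le (g k) x
    have h3 := hinfle k
    have h4 := hsupge k
    have h5 := hosc k
    rw [abs_le]
    constructor <;> linarith
  have hS1 : ∀ x, Summable fun k : ℕ => |∑ y, (P ^ k) x y * f y| := by
    intro x
    refine Summable.of_nonneg_of_le (fun k => abs_nonneg _) (fun k => hbound k x) ?_
    exact (summable_geometric_of_lt_one hr0 hr1).mul_left _
  have hsum : ∀ x, Summable fun k => g k x := fun x => (hS1 x).of_abs
  -- Poisson equation
  have hPoisson : ∀ x, (∑ y, P x y * u y) - u x = -f x := by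
    intro x
    have h2 : ∑ y, P x y * u y = ∑' k, g (k + 1) x := by
      calc ∑ y, P x y * u y = ∑ y, ∑' k, P x y * g k y := by
            exact Finset.sum_congr rfl fun y _ => by rw [hu y]; exact (tsum_mul_left).symm
        _ = ∑' k, ∑ y, P x y * g k y :=
            (Summable.tsum_finsetSum fun y _ => (hsum y).mul_left _).symm
        _ = ∑' k, g (k + 1) x := tsum_congr fun k => (hgsucc k x).symm
    have h3 : u x = g 0 x + ∑' k, g (k + 1) x := by
      rw [hu x]
      exact Summable.tsum_eq_zero_add (hsum x)
    rw [h2, h3, hg0 x]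
    ring
  -- centering
  have hcent : ∑ x, u x * μ x = 0 := by
    calc ∑ x, u x * μ x = ∑ x, ∑' k, g k x * μ x := by
          exact Finset.sum_congr rfl fun x _ => by rw [hu x]; exact (tsum_mul_right).symm
      _ = ∑' k, ∑ x, g k x * μ x := (Summable.tsum_finsetSum fun x _ => (hsum x).mul_right _).symm
      _ = 0 := by
          have h : ∀ k, ∑ x, g k x * μ x = 0 := by
            intro k
            rw [← hgcent k]
            exact Finset.sum_congr rfl fun x _ => mul_comm _ _
          simp [h]
  refine ⟨hS1, hPoisson, hcent, ?_⟩
  intro v hv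
  set w : S → ℝ := fun x => v x - u x with hwdef
  have hw : ∀ x, ∑ y, P x y * w y = w x := by
    intro x
    have h1 := hv x
    have h2 := hPoisson x
    simp only [hwdef, mul_sub, Finset.sum_sub_distrib]
    linarith
  have hoscw : mSup w - mInf w ≤ (1 - κ) * (mSup w - mInf w) := by
    have h := osc_contract P hpos hrow κ hκle w
    rwa [show (fun x => ∑ y, P x y * w y) = w from funext hw] at h
  have hosc0 : mSup w - mInf w = 0 := by
    nlinarith [osc_nonneg w, hκ]
  refine ⟨mInf w, fun x => ?_⟩
  have h1 : w x = mInf w := by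
    have := le_mSup w x
    have := mInf_le w x
    linarith
  have : v x - u x = mInf w := h1
  linarith
end
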